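/- If all the lifetimes T^{(l)}_j are mutually independent and for each type k they have common distribution function F_k (F̄_k := 1 − F_k), then for all times 0 ≤ s ≤ τ and all count vectors l ≤ m (componentwise) with 0 ≤ m_k ≤ n_k and 0 ≤ l_k ≤ m_k: P( T > s, T ≤ τ, and for every k: C_k(s) = m_k and C_k(τ) = l_k ) = [ Φ(m_1,…,m_L) − Φ(l_1,…,l_L) ] · ∏_{k=1}^L C(n_k, m_k) C(m_k, l_k) · F̄_k(τ)^{l_k} · (F̄_k(s) − F̄_k(τ))^{m_k−l_k} · F_k(s)^{n_k−m_k}. -/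

import Mathlib

/-!
Since `s ≤ τ`, the event `{τ < T}` is contained in `{s < T}`, so the probability in question is
`P(s < T, C(s) = m, C(τ) = l) - P(τ < T, C(s) = m, C(τ) = l)`, and `{t < T} = {φ(X(t)) = 1}`.
Both events are unions of atoms `{X(s) = a, X(τ) = b}`; such an atom is empty unless `b ≤ a`
(components only fail), and by independence an atom with counts `(m, l)` has probability
`∏ₖ F̄ₖ(τ)^lₖ (F̄ₖ(s) - F̄ₖ(τ))^(mₖ-lₖ) Fₖ(s)^(nₖ-mₖ)`. It remains to count pairs `b ≤ a`: a
working `a` with counts `m` lies above `∏ₖ C(mₖ, lₖ)` vectors `b` with counts `l`, and a working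
`b` with counts `l` lies below `∏ₖ C(nₖ - lₖ, mₖ - lₖ)` vectors `a` with counts `m`. The identity
`C(n, m) C(m, l) = C(n, l) C(n - l, m - l)` turns both counts into the survival signature.
-/

open MeasureTheory Finset ProbabilityTheory

noncomputable def survSig {L : ℕ} (n : Fin L → ℕ)
    (φ : ((l : Fin L) → Fin (n l) → Bool) → Bool) (c : Fin L → ℕ) : ℝ :=
  (∑ x : (l : Fin L) → Fin (n l) → Bool,
      if (∀ l, (Finset.univ.filter fun j => x l j = true).card = c l) ∧ φ x = true
      then (1 : ℝ) else 0)
    / ∏ l, (Nat.choose (n l) (c l) : ℝ)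

instance Pi.instDecidableLEOfFintype {ι : Type*} {α : ι → Type*} [Fintype ι] [∀ i, LE (α i)]
    [∀ i, DecidableLE (α i)] : DecidableLE (∀ i, α i) :=
  fun f g => inferInstanceAs (Decidable (∀ i, f i ≤ g i))

theorem prod_ite_ite_eq_pow {κ M : Type*} [Fintype κ] [CommMonoid M] {x y : κ → Bool}
    (hyx : y ≤ x) (A B C : M) :
    ∏ j, (if y j then A else if x j then B else C)
      = A ^ #{j | y j} * B ^ (#{j | x j} - #{j | y j}) * C ^ (Fintype.card κ - #{j | x j}) := by
  classical
  simp only [Pi.le_def, Bool.le_iff_imp] at hyx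
  have hB : #{j | y j = false ∧ x j} = #{j | x j} - #{j | y j} := by
    rw [← card_sdiff_of_subset (fun j => by simpa using hyx j)]
    congr 1; ext j; simp [and_comm]
  have hC : #{j | y j = false ∧ x j = false} = Fintype.card κ - #{j | x j} := by
    rw [← card_compl, compl_filter]
    congr 1; ext j
    simpa using fun hx : x j = false => Bool.eq_false_iff.2 fun hy => by simp [hyx j hy] at hx
  rw [prod_ite, prod_ite, filter_filter, filter_filter]
  simp only [prod_const, Bool.not_eq_true]
  rw [hB, hC, mul_assoc]

theorem card_filter_prod_eq_mul {α β : Type*} [Fintype α] [Fintype β] {p : α → Prop}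
    {r : α → β → Prop} [DecidablePred p] [∀ a, DecidablePred (r a)] {c : ℕ}
    (h : ∀ a, p a → #{b | r a b} = c) :
    #{ab : α × β | p ab.1 ∧ r ab.1 ab.2} = #{a | p a} * c := by
  rw [card_filter, Fintype.sum_prod_type, card_filter, sum_mul]
  refine sum_congr rfl fun a _ => ?_
  split_ifs with hp
  · simp [hp, ← h a hp]
  · simp [hp]

theorem card_filter_forall_eq_prod {ι : Type*} [Fintype ι] [DecidableEq ι] {α : ι → Type*}
    [∀ i, Fintype (α i)] [∀ i, DecidableEq (α i)] (p : ∀ i, α i → Prop)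
    [∀ i, DecidablePred (p i)] :
    #{x : ∀ i, α i | ∀ i, p i (x i)} = ∏ i, #{y | p i y} := by
  rw [← Fintype.card_piFinset]
  congr 1
  ext
  simp [Fintype.mem_piFinset]

/-- `y ↦ {j | y j} \ {j | b j}` is a bijection onto the `(c - #b)`-subsets of `{j | a j} \ {j | b j}`. -/
theorem card_filter_Icc_card_eq {κ : Type*} [Fintype κ] [DecidableEq κ] {a b : κ → Bool}
    (hba : b ≤ a) {c : ℕ} (hc : #{j | b j} ≤ c) :
    #{y : κ → Bool | b ≤ y ∧ y ≤ a ∧ #{j | y j} = c}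
      = (#{j | a j} - #{j | b j}).choose (c - #{j | b j}) := by
  simp only [Pi.le_def, Bool.le_iff_imp] at hba ⊢
  have hsub : ({j | b j} : Finset κ) ⊆ ({j | a j} : Finset κ) := fun j => by simpa using hba j
  rw [← card_sdiff_of_subset hsub, ← card_powersetCard]
  refine card_nbij' (fun y => ({j | y j} : Finset κ) \ ({j | b j} : Finset κ))
    (fun S j => b j || decide (j ∈ S)) ?_ ?_ ?_ ?_
  · intro y hy
    simp only [coe_filter, mem_univ, true_and, Set.mem_ofPred_eq, mem_coe,
      mem_powersetCard] at hy ⊢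
    obtain ⟨hby, hya, rfl⟩ := hy
    refine ⟨sdiff_subset_sdiff (fun j => by simpa using hya j) le_rfl, ?_⟩
    rw [card_sdiff_of_subset (fun j => by simpa using hby j)]
  · intro S hS
    simp only [coe_filter, mem_univ, true_and, Set.mem_ofPred_eq, mem_coe,
      mem_powersetCard] at hS ⊢
    obtain ⟨hSab, hcard⟩ := hS
    have hunion : univ.filter (fun j => b j || decide (j ∈ S)) = univ.filter (fun j => b j) ∪ S := by
      ext; simp
    have hdisj : Disjoint ({j | b j} : Finset κ) S :=
      disjoint_left.2 fun j hb hS => (mem_sdiff.1 (hSab hS)).2 hb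
    refine ⟨fun j => by simp_all, fun j hj => ?_, ?_⟩
    · by_cases hbj : b j
      · exact hba j hbj
      · simpa using (mem_sdiff.1 (hSab (by simpa [hbj] using hj))).1
    · rw [hunion, card_union_of_disjoint hdisj, hcard]
      omega
  · intro y hy
    simp only [coe_filter, Set.mem_ofPred_eq] at hy
    funext j
    by_cases hj : b j <;> simp_all
  · intro S hS
    simp only [mem_coe, mem_powersetCard] at hS
    ext j
    have := @hS.1 j
    by_cases hj : b j <;> simp_all

section StateVector

variable {ι : Type*} {κ : ι → Type*}

def numWorking [∀ i, Fintype (κ i)] (x : (i : ι) → κ i → Bool) (i : ι) : ℕ := #{j | x i j}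

variable [Fintype ι] [DecidableEq ι] [∀ i, Fintype (κ i)] [∀ i, DecidableEq (κ i)]

theorem card_le_numWorking_eq (a : (i : ι) → κ i → Bool) (c : ι → ℕ) :
    #{x | x ≤ a ∧ numWorking x = c} = ∏ i, (numWorking a i).choose (c i) := by
  calc #{x | x ≤ a ∧ numWorking x = c}
      = #{x : (i : ι) → κ i → Bool | ∀ i, x i ≤ a i ∧ #{j | x i j} = c i} := by
        refine congrArg card (filter_congr fun x _ => ?_)
        rw [Pi.le_def, funext_iff, ← forall_and]
        rfl
    _ = ∏ i, #{y | y ≤ a i ∧ #{j | y j} = c i} :=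
        card_filter_forall_eq_prod fun i y => y ≤ a i ∧ #{j | y j} = c i
    _ = _ := prod_congr rfl fun i _ => by
        simpa [numWorking] using card_filter_Icc_card_eq (bot_le : ⊥ ≤ a i) (c := c i) (by simp)

theorem card_ge_numWorking_eq {b : (i : ι) → κ i → Bool} {c : ι → ℕ}
    (hbc : numWorking b ≤ c) :
    #{x | b ≤ x ∧ numWorking x = c}
      = ∏ i, (Fintype.card (κ i) - numWorking b i).choose (c i - numWorking b i) := by
  calc #{x | b ≤ x ∧ numWorking x = c}
      = #{x : (i : ι) → κ i → Bool | ∀ i, b i ≤ x i ∧ #{j | x i j} = c i} := by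
        refine congrArg card (filter_congr fun x _ => ?_)
        rw [Pi.le_def, funext_iff, ← forall_and]
        rfl
    _ = ∏ i, #{y | b i ≤ y ∧ #{j | y j} = c i} :=
        card_filter_forall_eq_prod fun i y => b i ≤ y ∧ #{j | y j} = c i
    _ = _ := prod_congr rfl fun i _ => by
        simpa [numWorking] using card_filter_Icc_card_eq (le_top : b i ≤ ⊤) (hbc i)

theorem card_statePairs_of_fst (p : ((i : ι) → κ i → Bool) → Bool) (m l : ι → ℕ) :
    #{ab : ((i : ι) → κ i → Bool) × ((i : ι) → κ i → Bool) |
        (p ab.1 ∧ numWorking ab.1 = m ∧ numWorking ab.2 = l) ∧ ab.2 ≤ ab.1}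
      = #{a | p a ∧ numWorking a = m} * ∏ i, (m i).choose (l i) := by
  calc _ = #{ab : ((i : ι) → κ i → Bool) × ((i : ι) → κ i → Bool) |
        (p ab.1 ∧ numWorking ab.1 = m) ∧ (ab.2 ≤ ab.1 ∧ numWorking ab.2 = l)} :=
        congrArg card (filter_congr fun ab _ => by tauto)
    _ = _ := card_filter_prod_eq_mul (p := fun a => p a ∧ numWorking a = m)
        (r := fun a b => b ≤ a ∧ numWorking b = l) fun a ha => by
        rw [card_le_numWorking_eq, ha.2]

theorem card_statePairs_of_snd (p : ((i : ι) → κ i → Bool) → Bool) {m l : ι → ℕ}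
    (hlm : l ≤ m) :
    #{ab : ((i : ι) → κ i → Bool) × ((i : ι) → κ i → Bool) |
        (p ab.2 ∧ numWorking ab.1 = m ∧ numWorking ab.2 = l) ∧ ab.2 ≤ ab.1}
      = #{b | p b ∧ numWorking b = l} * ∏ i, (Fintype.card (κ i) - l i).choose (m i - l i) := by
  calc _ = #{ba : ((i : ι) → κ i → Bool) × ((i : ι) → κ i → Bool) |
        (p ba.1 ∧ numWorking ba.1 = l) ∧ (ba.1 ≤ ba.2 ∧ numWorking ba.2 = m)} := by
        refine card_equiv (Equiv.prodComm _ _) fun ab => ?_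
        simp only [mem_filter, mem_univ, true_and, Equiv.prodComm_apply, Prod.fst_swap,
          Prod.snd_swap]
        tauto
    _ = _ := card_filter_prod_eq_mul (p := fun b => p b ∧ numWorking b = l)
        (r := fun b a => b ≤ a ∧ numWorking a = m) fun b hb => by
        rw [card_ge_numWorking_eq (hb.2.trans_le hlm), hb.2]

end StateVector

theorem measurable_decide_lt (t : ℝ) : Measurable fun x : ℝ => decide (t < x) :=
  measurable_to_bool <| by convert (measurableSet_Ioi : MeasurableSet (Set.Ioi t)); ext; simp

section StateProcess

variable {Ω : Type*} {ι : Type*} {κ : ι → Type*} {T : (i : ι) → κ i → Ω → ℝ}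

/-- The paper's state vector `X(t)`; `numWorking (stateAt T t ω)` is the count vector `C(t)`. -/
noncomputable def stateAt (T : (i : ι) → κ i → Ω → ℝ) (t : ℝ) (ω : Ω) : (i : ι) → κ i → Bool :=
  fun i j => decide (t < T i j ω)

theorem stateAt_anti {s t : ℝ} (hst : s ≤ t) (ω : Ω) : stateAt T t ω ≤ stateAt T s ω :=
  fun i j => Bool.le_iff_imp.2 fun h => by
    simpa [stateAt] using hst.trans_lt (by simpa [stateAt] using h)

variable [MeasurableSpace Ω]

theorem measurable_stateAt (hT : ∀ i j, Measurable (T i j)) (t : ℝ) : Measurable (stateAt T t) :=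
  measurable_pi_lambda _ fun i => measurable_pi_lambda _ fun j =>
    (measurable_decide_lt t).comp (hT i j)

theorem measurableSet_stateAt_pair [Finite ι] [∀ i, Finite (κ i)]
    (hT : ∀ i j, Measurable (T i j)) (s τ : ℝ)
    (p : ((i : ι) → κ i → Bool) → ((i : ι) → κ i → Bool) → Prop) :
    MeasurableSet {ω | p (stateAt T s ω) (stateAt T τ ω)} :=
  (measurable_stateAt hT s).prodMk (measurable_stateAt hT τ)
    (MeasurableSet.of_discrete
      (s := {ab : ((i : ι) → κ i → Bool) × ((i : ι) → κ i → Bool) | p ab.1 ab.2}))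

variable {P : Measure Ω} [IsProbabilityMeasure P]

theorem measureReal_decide_lt_and_decide_lt {X : Ω → ℝ} (hX : Measurable X) {F : ℝ → ℝ}
    (hF : ∀ x, P.real {ω | X ω ≤ x} = F x) {s τ : ℝ} (hsτ : s ≤ τ) {a b : Bool} (hba : b ≤ a) :
    P.real {ω | decide (s < X ω) = a ∧ decide (τ < X ω) = b}
      = if b then 1 - F τ else if a then (1 - F s) - (1 - F τ) else F s := by
  have hIic (t : ℝ) : MeasurableSet {ω | X ω ≤ t} := hX measurableSet_Iic
  cases a <;> cases b
  · have : {ω | decide (s < X ω) = false ∧ decide (τ < X ω) = false} = {ω | X ω ≤ s} := by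
      ext ω; simpa using fun h : X ω ≤ s => h.trans hsτ
    rw [this]; simp [hF]
  · exact absurd hba (by decide)
  · have : {ω | decide (s < X ω) = true ∧ decide (τ < X ω) = false}
        = {ω | X ω ≤ τ} \ {ω | X ω ≤ s} := by
      ext ω; simp [and_comm]
    have hsub : {ω | X ω ≤ s} ⊆ {ω | X ω ≤ τ} := fun ω (h : X ω ≤ s) => h.trans hsτ
    rw [this, measureReal_sdiff (μ := P) hsub (hIic s)]
    simp [hF]
  · have : {ω | decide (s < X ω) = true ∧ decide (τ < X ω) = true} = {ω | X ω ≤ τ}ᶜ := by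
      ext ω; simpa using fun h : τ < X ω => hsτ.trans_lt h
    rw [this, probReal_compl_eq_one_sub (hIic τ)]
    simp [hF]

variable [Fintype ι] [∀ i, Fintype (κ i)]

theorem measureReal_stateAt_eq_prod (hT : ∀ i j, Measurable (T i j))
    (hindep : iIndepFun (fun p : Σ i, κ i => T p.1 p.2) P) {F : ι → ℝ → ℝ}
    (hF : ∀ i j x, P.real {ω | T i j ω ≤ x} = F i x) {s τ : ℝ} (hsτ : s ≤ τ)
    {a b : (i : ι) → κ i → Bool} (hba : b ≤ a) :
    P.real {ω | stateAt T s ω = a ∧ stateAt T τ ω = b}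
      = ∏ i, ∏ j,
          (if b i j then 1 - F i τ else if a i j then (1 - F i s) - (1 - F i τ) else F i s) := by
  have hcomp (p : Σ i, κ i) : MeasurableSet
      {x : ℝ | decide (s < x) = a p.1 p.2 ∧ decide (τ < x) = b p.1 p.2} :=
    (measurable_decide_lt s (measurableSet_singleton _)).inter
      (measurable_decide_lt τ (measurableSet_singleton _))
  have hset : {ω | stateAt T s ω = a ∧ stateAt T τ ω = b} = ⋂ p ∈ (univ : Finset (Σ i, κ i)),
      T p.1 p.2 ⁻¹' {x | decide (s < x) = a p.1 p.2 ∧ decide (τ < x) = b p.1 p.2} := by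
    ext ω; simp [stateAt, funext_iff, Sigma.forall, forall_and]
  rw [hset, measureReal_def, hindep.measure_inter_preimage_eq_mul _ fun p _ => hcomp p,
    ENNReal.toReal_prod, Fintype.prod_sigma]
  exact prod_congr rfl fun i _ => prod_congr rfl fun j _ =>
    measureReal_decide_lt_and_decide_lt (hT i j) (hF i j) hsτ (hba i j)

theorem measureReal_stateAt_eq_of_numWorking (hT : ∀ i j, Measurable (T i j))
    (hindep : iIndepFun (fun p : Σ i, κ i => T p.1 p.2) P) {F : ι → ℝ → ℝ}
    (hF : ∀ i j x, P.real {ω | T i j ω ≤ x} = F i x) {s τ : ℝ} (hsτ : s ≤ τ)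
    {m l : ι → ℕ} {a b : (i : ι) → κ i → Bool} (ha : numWorking a = m)
    (hb : numWorking b = l) :
    P.real {ω | stateAt T s ω = a ∧ stateAt T τ ω = b}
      = if b ≤ a then ∏ i, (1 - F i τ) ^ l i * ((1 - F i s) - (1 - F i τ)) ^ (m i - l i)
          * F i s ^ (Fintype.card (κ i) - m i) else 0 := by
  split_ifs with hba
  · rw [measureReal_stateAt_eq_prod hT hindep hF hsτ hba, ← ha, ← hb]
    exact prod_congr rfl fun i _ => prod_ite_ite_eq_pow (hba i) _ _ _
  · have : {ω | stateAt T s ω = a ∧ stateAt T τ ω = b} = ∅ := by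
      ext ω
      simp only [Set.mem_ofPred_eq, Set.mem_empty_iff_false, iff_false, not_and]
      rintro rfl rfl
      exact hba (stateAt_anti hsτ ω)
    simp [this]

theorem measureReal_stateAt_eq_card_mul [DecidableEq ι] [∀ i, DecidableEq (κ i)]
    (hT : ∀ i j, Measurable (T i j))
    (hindep : iIndepFun (fun p : Σ i, κ i => T p.1 p.2) P) {F : ι → ℝ → ℝ}
    (hF : ∀ i j x, P.real {ω | T i j ω ≤ x} = F i x) {s τ : ℝ} (hsτ : s ≤ τ)
    (ψ : ((i : ι) → κ i → Bool) → ((i : ι) → κ i → Bool) → Bool) (m l : ι → ℕ) :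
    P.real {ω | ψ (stateAt T s ω) (stateAt T τ ω)
        ∧ numWorking (stateAt T s ω) = m ∧ numWorking (stateAt T τ ω) = l}
      = #{ab : ((i : ι) → κ i → Bool) × ((i : ι) → κ i → Bool) |
          (ψ ab.1 ab.2 ∧ numWorking ab.1 = m ∧ numWorking ab.2 = l) ∧ ab.2 ≤ ab.1}
        * ∏ i, (1 - F i τ) ^ l i * ((1 - F i s) - (1 - F i τ)) ^ (m i - l i)
          * F i s ^ (Fintype.card (κ i) - m i) := by
  set Y : Ω → ((i : ι) → κ i → Bool) × ((i : ι) → κ i → Bool) :=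
    fun ω => (stateAt T s ω, stateAt T τ ω)
  have hY : Measurable Y := (measurable_stateAt hT s).prodMk (measurable_stateAt hT τ)
  set S : Finset (((i : ι) → κ i → Bool) × ((i : ι) → κ i → Bool)) :=
    {ab | ψ ab.1 ab.2 ∧ numWorking ab.1 = m ∧ numWorking ab.2 = l}
  have hfiber (ab : ((i : ι) → κ i → Bool) × ((i : ι) → κ i → Bool)) :
      Y ⁻¹' {ab} = {ω | stateAt T s ω = ab.1 ∧ stateAt T τ ω = ab.2} := by
    ext; simp [Y, Prod.ext_iff]
  have hset : {ω | ψ (stateAt T s ω) (stateAt T τ ω)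
      ∧ numWorking (stateAt T s ω) = m ∧ numWorking (stateAt T τ ω) = l} = Y ⁻¹' S := by
    ext ω; simp [S, Y]
  rw [hset, ← sum_measureReal_preimage_singleton S fun _ _ => hY (measurableSet_singleton _)]
  rw [sum_congr rfl fun ab hab => by
    simp only [S, mem_filter, mem_univ, true_and] at hab
    rw [hfiber, measureReal_stateAt_eq_of_numWorking hT hindep hF hsτ hab.2.1 hab.2.2]]
  rw [sum_ite, sum_const_zero, add_zero, sum_const, nsmul_eq_mul, filter_filter]

end StateProcess

theorem survSig_eq_card_div {L : ℕ} (n : Fin L → ℕ)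
    (φ : ((l : Fin L) → Fin (n l) → Bool) → Bool) (c : Fin L → ℕ) :
    survSig n φ c = #{x | φ x = true ∧ numWorking x = c} / ∏ l, ((n l).choose (c l) : ℝ) := by
  rw [survSig, sum_boole]
  congr 3
  exact filter_congr fun x _ => by rw [and_comm, funext_iff]; rfl

theorem survSig_sub_survSig_mul_prod_choose {L : ℕ} (n : Fin L → ℕ)
    (φ : ((l : Fin L) → Fin (n l) → Bool) → Bool) {l m : Fin L → ℕ} (hlm : ∀ k, l k ≤ m k)
    (hm : ∀ k, m k ≤ n k) :
    (survSig n φ m - survSig n φ l) * ∏ k, ((n k).choose (m k) * (m k).choose (l k) : ℝ)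
      = #{a | φ a = true ∧ numWorking a = m} * ∏ k, ((m k).choose (l k) : ℝ)
        - #{b | φ b = true ∧ numWorking b = l} * ∏ k, ((n k - l k).choose (m k - l k) : ℝ) := by
  have hDm : ∏ k, ((n k).choose (m k) : ℝ) ≠ 0 :=
    prod_ne_zero_iff.2 fun k _ => by exact_mod_cast (Nat.choose_pos (hm k)).ne'
  have hDl : ∏ k, ((n k).choose (l k) : ℝ) ≠ 0 :=
    prod_ne_zero_iff.2 fun k _ => by exact_mod_cast (Nat.choose_pos ((hlm k).trans (hm k))).ne'
  have hchoose : (∏ k, ((n k).choose (m k) : ℝ)) * ∏ k, ((m k).choose (l k) : ℝ)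
      = (∏ k, ((n k).choose (l k) : ℝ)) * ∏ k, ((n k - l k).choose (m k - l k) : ℝ) := by
    simp only [← prod_mul_distrib]
    exact prod_congr rfl fun k _ => by exact_mod_cast Nat.choose_mul (hlm k)
  rw [survSig_eq_card_div, survSig_eq_card_div, prod_mul_distrib]
  field_simp
  linear_combination -(#{b | φ b = true ∧ numWorking b = l} : ℝ) * hchoose

theorem stmt_17_general
    {Ω : Type*} [MeasurableSpace Ω] (P : Measure Ω) [IsProbabilityMeasure P]
    {L : ℕ} (n : Fin L → ℕ)
    (T : (k : Fin L) → Fin (n k) → Ω → ℝ)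
    (hTmeas : ∀ k j, Measurable (T k j))
    (hindep : iIndepFun
      (fun p : Σ k : Fin L, Fin (n k) => fun ω => T p.1 p.2 ω) P)
    (F : Fin L → ℝ → ℝ)
    (hF : ∀ k j x, (P {ω | T k j ω ≤ x}).toReal = F k x)
    (φ : ((k : Fin L) → Fin (n k) → Bool) → Bool)
    (Tsys : Ω → ℝ)
    (hT : ∀ t : ℝ, 0 ≤ t →
      {ω | t < Tsys ω} = {ω | φ (fun k j => decide (t < T k j ω)) = true})
    (s τ : ℝ) (hs : 0 ≤ s) (hsτ : s ≤ τ)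
    (l m : Fin L → ℕ) (hlm : ∀ k, l k ≤ m k) (hm : ∀ k, m k ≤ n k) :
    (P {ω | s < Tsys ω ∧ Tsys ω ≤ τ
        ∧ ∀ k, (Finset.univ.filter fun j : Fin (n k) => s < T k j ω).card = m k
            ∧ (Finset.univ.filter fun j : Fin (n k) => τ < T k j ω).card = l k}).toReal
    = (survSig n φ m - survSig n φ l)
        * ∏ k, (Nat.choose (n k) (m k) : ℝ) * (Nat.choose (m k) (l k) : ℝ)
            * (1 - F k τ) ^ (l k)
            * ((1 - F k s) - (1 - F k τ)) ^ (m k - l k)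
            * F k s ^ (n k - m k) := by
  have hsurv (t : ℝ) (ht : 0 ≤ t) (ω : Ω) : t < Tsys ω ↔ φ (stateAt T t ω) = true :=
    Set.ext_iff.1 (hT t ht) ω
  set A : ℝ → Set Ω := fun t => {ω | φ (stateAt T t ω) = true
    ∧ numWorking (stateAt T s ω) = m ∧ numWorking (stateAt T τ ω) = l} with hA
  have hE : {ω | s < Tsys ω ∧ Tsys ω ≤ τ
        ∧ ∀ k, (Finset.univ.filter fun j : Fin (n k) => s < T k j ω).card = m k
            ∧ (Finset.univ.filter fun j : Fin (n k) => τ < T k j ω).card = l k} = A s \ A τ := by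
    ext ω
    simp only [hA, Set.mem_sdiff, Set.mem_ofPred_eq, ← hsurv s hs, ← hsurv τ (hs.trans hsτ)]
    simp only [numWorking, stateAt, decide_eq_true_eq, funext_iff, ← forall_and, ← not_lt]
    tauto
  have hsub : A τ ⊆ A s := fun ω hω =>
    ⟨(hsurv s hs ω).1 (hsτ.trans_lt ((hsurv τ (hs.trans hsτ) ω).2 hω.1)), hω.2⟩
  have hmeas : MeasurableSet (A τ) := measurableSet_stateAt_pair hTmeas s τ fun a b =>
    φ b = true ∧ numWorking a = m ∧ numWorking b = l
  rw [← measureReal_def, hE, measureReal_sdiff hsub hmeas,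
    measureReal_stateAt_eq_card_mul hTmeas hindep hF hsτ (fun a _ => φ a),
    measureReal_stateAt_eq_card_mul hTmeas hindep hF hsτ (fun _ b => φ b),
    card_statePairs_of_fst, card_statePairs_of_snd _ hlm]
  push_cast
  simp only [Fintype.card_fin]
  rw [← sub_mul, ← survSig_sub_survSig_mul_prod_choose n φ hlm hm, mul_assoc, ← prod_mul_distrib]
  simp only [mul_assoc]

/-- For mutually independent lifetimes with common type-`k`
distribution functions `F_k`, for `0 ≤ s ≤ τ` and count vectors `l ≤ m`,
`P(s < T ≤ τ, C_k(s)=m_k, C_k(τ)=l_k ∀k)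
  = [Φ(m) − Φ(l)] ∏_k C(n_k,m_k) C(m_k,l_k) F̄_k(τ)^{l_k} (F̄_k(s) − F̄_k(τ))^{m_k−l_k} F_k(s)^{n_k−m_k}`. -/
theorem stmt_17
    {Ω : Type*} [MeasurableSpace Ω] (P : Measure Ω) [IsProbabilityMeasure P]
    {L : ℕ} (hL : 1 ≤ L) (n : Fin L → ℕ) (hn : ∀ k, 1 ≤ n k)
    (T : (k : Fin L) → Fin (n k) → Ω → ℝ)
    (hTmeas : ∀ k j, Measurable (T k j))
    (hindep : iIndepFun
      (fun p : Σ k : Fin L, Fin (n k) => fun ω => T p.1 p.2 ω) P)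
    (F : Fin L → ℝ → ℝ)
    (hF : ∀ k j x, (P {ω | T k j ω ≤ x}).toReal = F k x)
    (φ : ((k : Fin L) → Fin (n k) → Bool) → Bool) (hφ : Monotone φ)
    (Tsys : Ω → ℝ) (hTsys : Measurable Tsys)
    (hT : ∀ t : ℝ, 0 ≤ t →
      {ω | t < Tsys ω} = {ω | φ (fun k j => decide (t < T k j ω)) = true})
    (s τ : ℝ) (hs : 0 ≤ s) (hsτ : s ≤ τ)
    (l m : Fin L → ℕ) (hlm : ∀ k, l k ≤ m k) (hm : ∀ k, m k ≤ n k) :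
    (P {ω | s < Tsys ω ∧ Tsys ω ≤ τ
        ∧ ∀ k, (Finset.univ.filter fun j : Fin (n k) => s < T k j ω).card = m k
            ∧ (Finset.univ.filter fun j : Fin (n k) => τ < T k j ω).card = l k}).toReal
    = (survSig n φ m - survSig n φ l)
        * ∏ k, (Nat.choose (n k) (m k) : ℝ) * (Nat.choose (m k) (l k) : ℝ)
            * (1 - F k τ) ^ (l k)
            * ((1 - F k s) - (1 - F k τ)) ^ (m k - l k)
            * F k s ^ (n k - m k) :=
  stmt_17_general P n T hTmeas hindep F hF φ Tsys hT s τ hs hsτ l m hlm hm
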